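/- For an LNEC code, an edge e ∈ E not in In(t), and the row vector row_t(e') = (f̃_ẽ(e') : ẽ ∈ In(t)) of the decoding matrix at sink t, one has row_t(e') = Σ_{d ∈ Out(head(e))} k_{e,d} · row_t(d'). Consequently, if η separates t from {e}, then row_t(e') lies in the span of {row_t(d') : d ∈ η}, i.e., in Δ(t,η). -/

import Mathlib

open Finset Matrix

/-- `l` is a nonempty directed trail: consecutive edges are adjacent. -/
def IsTrail {V E : Type*} (tail head : E → V) (l : List E) : Prop :=
  l ≠ [] ∧ l.Chain' (fun a b => head a = tail b)

/-- A directed path from the edge `e` to the node `t`. -/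
def EPath {V E : Type*} (tail head : E → V) (e : E) (t : V) (l : List E) : Prop :=
  IsTrail tail head l ∧ l.head? = some e ∧ ∃ f, l.getLast? = some f ∧ head f = t

/-- A directed path from the node `s` to the node `t`. -/
def NPath {V E : Type*} (tail head : E → V) (s t : V) (l : List E) : Prop :=
  IsTrail tail head l ∧ (∃ f, l.head? = some f ∧ tail f = s) ∧
    ∃ g, l.getLast? = some g ∧ head g = t

/-- `A` is a cut separating the node `t` from the edge subset `ξ`: every directed path
from an edge of `ξ` to `t` meets `A`. -/
def SeparatesF {V E : Type*} (tail head : E → V) (ξ : Finset E) (t : V) (A : Finset E) : Prop :=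
  ∀ e ∈ ξ, ∀ l : List E, EPath tail head e t l → ∃ a ∈ A, a ∈ l

/-- `A` is a cut separating the node `t` from the node `s`. -/
def SeparatesN {V E : Type*} (tail head : E → V) (s t : V) (A : Finset E) : Prop :=
  ∀ l : List E, NPath tail head s t l → ∃ a ∈ A, a ∈ l

/-- Minimum cut capacity separating `t` from the edge subset `ξ`. -/
noncomputable def mincutE {V E : Type*} (tail head : E → V) (ξ : Finset E) (t : V) : ℕ :=
  sInf {n | ∃ A : Finset E, SeparatesF tail head ξ t A ∧ A.card = n}

/-- Minimum cut capacity separating `t` from the node `s`. -/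
noncomputable def mincutN {V E : Type*} (tail head : E → V) (s t : V) : ℕ :=
  sInf {n | ∃ A : Finset E, SeparatesN tail head s t A ∧ A.card = n}

/-- `A` is a minimum cut separating `t` from `ξ`. -/
def IsMinCut {V E : Type*} (tail head : E → V) (ξ : Finset E) (t : V) (A : Finset E) : Prop :=
  SeparatesF tail head ξ t A ∧ A.card = mincutE tail head ξ t

/-- `A` is the primary minimum cut separating `t` from `ξ`: a minimum cut that separates
`t` from every minimum cut separating `t` from `ξ`. -/
def IsPrimaryMinCut {V E : Type*} (tail head : E → V) (ξ : Finset E) (t : V) (A : Finset E) :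
    Prop :=
  IsMinCut tail head ξ t A ∧ ∀ B : Finset E, IsMinCut tail head ξ t B → SeparatesF tail head B t A

/-- `η` is primary for `t`: `η` is the primary minimum cut separating `t` from `η` itself. -/
def PrimaryFor {V E : Type*} (tail head : E → V) (η : Finset E) (t : V) : Prop :=
  IsPrimaryMinCut tail head η t η

/-- The directed graph is acyclic: there is a topological order on the edges. -/
def Acyclic {V E : Type*} (tail head : E → V) : Prop :=
  ∃ f : E → ℕ, ∀ d e, head d = tail e → f d < f e

/-- The product of the local encoding coefficients along a directed path
`P = (e₁, …, e_m)`: `K_P = ∏_{i=1}^{m−1} k_{e_i, e_{i+1}}`, with `K_P = 1` for `m ≤ 1`. -/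
def Kprod {E F : Type*} [Field F] (k : E → E → F) : List E → F
  | [] => 1
  | [_] => 1
  | e :: f :: rest => k e f * Kprod k (f :: rest)

/-- A directed path from the edge `e` to the edge `et`. -/
def EEPath {V E : Type*} (tail head : E → V) (e et : E) (l : List E) : Prop :=
  IsTrail tail head l ∧ l.head? = some e ∧ l.getLast? = some et

/-- The row of the decoding matrix at sink `t` indexed by the imaginary error edge of `e`:
`row_t(e') = (f̃_et(e') : et ∈ In(t))`, where `g et e = f̃_et(e')`. -/
def rowAt {V E F : Type*} (head : E → V) (t : V) (g : E → E → F) (e : E) :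
    {d : E // head d = t} → F :=
  fun et => g et.val e

/-!
A path from `e` to an edge into `t ≠ head e` is `e` followed by a path from some out-edge `d` of
`head e`, and its coefficient product splits off `k e d`; summing gives the row recursion. Since
the network is acyclic, the recursion can be unfolded by well-founded induction along out-edges:
an edge `e ∉ η` passes the separation hypothesis on to its out-edges, and an edge into `t` that
is separated from `t` by `η` lies in `η`.
-/

section

variable {V E : Type*} {tail head : E → V}

theorem isTrail_cons_cons_iff {a b : E} {r : List E} :
    IsTrail tail head (a :: b :: r) ↔ head a = tail b ∧ IsTrail tail head (b :: r) := by
  simp only [IsTrail, ne_eq, reduceCtorEq, not_false_eq_true, true_and]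
  exact List.isChain_cons_cons

theorem EEPath.exists_eq_cons {e et : E} {l : List E} (h : EEPath tail head e et l) :
    ∃ r, l = e :: r :=
  List.head?_eq_some_iff.1 h.2.1

theorem EEPath.exists_eq_cons_cons {e et : E} {l : List E} (h : EEPath tail head e et l)
    (hne : e ≠ et) : ∃ d r, l = e :: d :: r := by
  obtain ⟨r, rfl⟩ := h.exists_eq_cons
  cases r with
  | nil => exact absurd (by simpa using h.2.2) hne
  | cons d r => exact ⟨d, r, rfl⟩

theorem eePath_cons_cons_iff {e d et : E} {r : List E} :
    EEPath tail head e et (e :: d :: r) ↔ head e = tail d ∧ EEPath tail head d et (d :: r) := by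
  simp [EEPath, isTrail_cons_cons_iff, and_assoc]

theorem EPath.singleton (e : E) : EPath tail head e (head e) [e] :=
  ⟨⟨List.cons_ne_nil _ _, List.isChain_singleton _⟩, rfl, e, rfl, rfl⟩

theorem EPath.cons {e d : E} {t : V} {l : List E} (hed : head e = tail d)
    (h : EPath tail head d t l) : EPath tail head e t (e :: l) := by
  obtain ⟨⟨-, hchain⟩, hhead, f, hlast, hf⟩ := h
  obtain ⟨r, rfl⟩ := List.head?_eq_some_iff.1 hhead
  exact ⟨⟨List.cons_ne_nil _ _, List.isChain_cons_cons.2 ⟨hed, hchain⟩⟩, rfl, f,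
    List.mem_getLast?_cons hlast, hf⟩

theorem Acyclic.wellFounded_succ [Finite E] (h : Acyclic tail head) :
    WellFounded (fun d e : E => head e = tail d) := by
  obtain ⟨f, hf⟩ := h
  let r : E → E → Prop := fun d e => f e < f d
  have : IsTrans E r := ⟨fun _ _ _ h₁ h₂ => h₂.trans h₁⟩
  have : Std.Irrefl r := ⟨fun _ => lt_irrefl _⟩
  exact Subrelation.wf (fun hed => hf _ _ hed) (Finite.wellFounded_of_trans_of_irrefl r)

variable [Fintype E] [DecidableEq V]

theorem sum_Kprod_eq_sum_out {F : Type*} [Field F] {paths : E → E → Finset (List E)}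
    (hpaths : ∀ e et l, l ∈ paths e et ↔ EEPath tail head e et l) (k : E → E → F) {e et : E}
    (hne : e ≠ et) :
    ∑ l ∈ paths e et, Kprod k l =
      ∑ d ∈ univ.filter (fun d => tail d = head e), k e d * ∑ l ∈ paths d et, Kprod k l := by
  simp only [mul_sum]
  rw [sum_sigma']
  refine sum_nbij' (fun l => ⟨l.tail.headD e, l.tail⟩) (fun p => e :: p.2) ?_ ?_ ?_ ?_ ?_
  · intro l hl
    obtain ⟨d, r, rfl⟩ := ((hpaths _ _ _).1 hl).exists_eq_cons_cons hne
    simpa [hpaths, eq_comm] using eePath_cons_cons_iff.1 ((hpaths _ _ _).1 hl)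
  · rintro ⟨d, l⟩ hp
    simp only [mem_sigma, mem_filter, mem_univ, true_and, hpaths] at hp ⊢
    obtain ⟨r, rfl⟩ := hp.2.exists_eq_cons
    exact eePath_cons_cons_iff.2 ⟨hp.1.symm, hp.2⟩
  · intro l hl
    obtain ⟨d, r, rfl⟩ := ((hpaths _ _ _).1 hl).exists_eq_cons_cons hne
    rfl
  · rintro ⟨d, l⟩ hp
    simp only [mem_sigma, hpaths] at hp
    obtain ⟨r, rfl⟩ := hp.2.exists_eq_cons
    rfl
  · intro l hl
    obtain ⟨d, r, rfl⟩ := ((hpaths _ _ _).1 hl).exists_eq_cons_cons hne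
    rfl

theorem rowAt_eq_sum_out {F : Type*} [Field F] {paths : E → E → Finset (List E)}
    (hpaths : ∀ e et l, l ∈ paths e et ↔ EEPath tail head e et l) {k g : E → E → F}
    (hg : ∀ et e, g et e = ∑ l ∈ paths e et, Kprod k l) {t : V} {e : E} (he : head e ≠ t) :
    rowAt head t g e = ∑ d ∈ univ.filter (fun d => tail d = head e), k e d • rowAt head t g d := by
  funext et
  simp only [rowAt, Finset.sum_apply, Pi.smul_apply, smul_eq_mul, hg]
  exact sum_Kprod_eq_sum_out hpaths k fun h => he (h ▸ et.2 :)

theorem mem_span_image_of_separates {R M : Type*} [Semiring R] [AddCommMonoid M] [Module R M]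
    (hacyc : Acyclic tail head) {t : V} (k : E → E → R) (row : E → M)
    (hrow : ∀ e, head e ≠ t → row e = ∑ d ∈ univ.filter (fun d => tail d = head e), k e d • row d)
    {η : Finset E} (e : E) (hsep : ∀ l, EPath tail head e t l → ∃ a ∈ η, a ∈ l) :
    row e ∈ Submodule.span R (row '' η) := by
  induction e using hacyc.wellFounded_succ.induction with
  | _ e ih =>
  by_cases heη : e ∈ η
  · exact Submodule.subset_span ⟨e, heη, rfl⟩
  have he : head e ≠ t := by
    rintro rfl
    obtain ⟨a, ha, hal⟩ := hsep [e] (EPath.singleton e)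
    exact heη (List.mem_singleton.1 hal ▸ ha)
  rw [hrow e he]
  refine Submodule.sum_mem _ fun d hd => Submodule.smul_mem _ _ (ih d ?_ fun l hl => ?_)
  · exact (mem_filter.1 hd).2.symm
  · obtain ⟨a, ha, hal⟩ := hsep _ (hl.cons (mem_filter.1 hd).2.symm)
    exact ⟨a, ha, (List.mem_cons.1 hal).resolve_left fun hae => heη (hae ▸ ha)⟩

end

theorem stmt12_general {V E F : Type*} [Fintype E] [DecidableEq V]
    [Field F]
    (tail head : E → V) (hacyc : Acyclic tail head) (t : V)
    (k : E → E → F) (g : E → E → F)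
    (paths : E → E → Finset (List E))
    (hpaths : ∀ e et l, l ∈ paths e et ↔ EEPath tail head e et l)
    (hg : ∀ et e, g et e = ∑ l ∈ paths e et, Kprod k l) :
    ∀ e : E, head e ≠ t →
      (rowAt head t g e =
        ∑ d ∈ Finset.univ.filter (fun d => tail d = head e), k e d • rowAt head t g d) ∧
      ∀ η : Finset E, (∀ l : List E, EPath tail head e t l → ∃ a ∈ η, a ∈ l) →
        rowAt head t g e ∈ Submodule.span F (rowAt head t g '' (η : Set E)) := by
  have hrow (e : E) (he : head e ≠ t) := rowAt_eq_sum_out hpaths hg he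
  exact fun e he => ⟨hrow e he, fun η => mem_span_image_of_separates hacyc k _ hrow e⟩

/-- For an edge `e ∉ In(t)`, the row `row_t(e')` satisfies
`row_t(e') = Σ_{d ∈ Out(head e)} k_{e,d} · row_t(d')`; consequently, if `η` separates `t`
from `{e}`, then `row_t(e')` lies in the span of `{row_t(d') : d ∈ η}`, i.e. in `Δ(t,η)`.
The extended global encoding kernels are given through the path-product formula
`f̃_et(e') = Σ_{P : path from e to et} K_P`. -/
theorem stmt12 {V E F : Type*} [Fintype E] [DecidableEq E] [DecidableEq V]
    [Field F] [Fintype F]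
    (tail head : E → V) (hacyc : Acyclic tail head) (t : V)
    (k : E → E → F) (g : E → E → F)
    (paths : E → E → Finset (List E))
    (hpaths : ∀ e et l, l ∈ paths e et ↔ EEPath tail head e et l)
    (hg : ∀ et e, g et e = ∑ l ∈ paths e et, Kprod k l) :
    ∀ e : E, head e ≠ t →
      (rowAt head t g e =
        ∑ d ∈ Finset.univ.filter (fun d => tail d = head e), k e d • rowAt head t g d) ∧
      ∀ η : Finset E, (∀ l : List E, EPath tail head e t l → ∃ a ∈ η, a ∈ l) →
        rowAt head t g e ∈ Submodule.span F (rowAt head t g '' (η : Set E)) :=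
  stmt12_general tail head hacyc t k g paths hpaths hg
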